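/- Let Λ_l < ⋯ < Λ_1 be positive reals, γ > 0 with γ < Λ_l, and set Λ_j^γ := Λ_j − γ. Let λ^γ = (λ_1^γ,…,λ_k^γ) be the k-tuple obtained by repeating each Λ_j^γ with multiplicity k_j. Suppose γ > 0 and let b := (1/2)·min(γ, a) where a > 0 satisfies: for all j and all multi-indices α ∈ ℕ^k with 2 ≤ |α| ≤ ⌊2Λ_1/Λ_l⌋ and α·λ ≠ Λ_j, one has |α·λ − Λ_j| > a (where λ is the unshifted tuple). Assume moreover γ < Λ_l/2 and γ(⌊Λ_1^γ/Λ_l^γ⌋ − 1) < a/2. Then for every j ∈ {1,…,l} and every α ∈ ℕ^k with 2 ≤ |α| ≤ ⌊Λ_1^γ/Λ_l^γ⌋, one has |α_1λ_1^γ + ⋯ + α_kλ_k^γ − Λ_j^γ| > b. In particular the shifted exponents λ_i^γ satisfy no resonance relation. -/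
import Mathlib


/-- Cancellation of resonances for the shifted Lyapunov spectrum (Lemma 5.4):
if the unshifted exponents have a spectral gap `a` away from resonances, then for the
γ-shifted spectrum every multi-index `α` with `2 ≤ |α| ≤ ⌊Λ₁^γ/Λ_l^γ⌋` satisfies
`|α·λ^γ − Λ_j^γ| > b` where `b = (1/2) min(γ,a)`. -/
theorem stmt3 (k l : ℕ) (Λ : Fin l → ℝ) (lam : Fin k → ℝ) (Λ1 Λl a γ b : ℝ)
    (hΛpos : ∀ j, 0 < Λ j)
    (hΛl0 : 0 < Λl)
    (hmax : ∀ j, Λ j ≤ Λ1) (hmin : ∀ j, Λl ≤ Λ j)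
    (hvals : ∀ i, ∃ j, lam i = Λ j)
    (ha : 0 < a)
    (hgap : ∀ (j : Fin l) (α : Fin k → ℕ), 2 ≤ ∑ i, α i → ∑ i, α i ≤ ⌊2 * Λ1 / Λl⌋₊ →
      (∑ i, (α i : ℝ) * lam i) ≠ Λ j → a < |(∑ i, (α i : ℝ) * lam i) - Λ j|)
    (hγ0 : 0 < γ) (hγ1 : γ < Λl / 2)
    (hγ2 : γ * ((⌊(Λ1 - γ) / (Λl - γ)⌋₊ : ℝ) - 1) < a / 2)
    (hb : b = (1 / 2) * min γ a) :
    ∀ (j : Fin l) (α : Fin k → ℕ), 2 ≤ ∑ i, α i → ∑ i, α i ≤ ⌊(Λ1 - γ) / (Λl - γ)⌋₊ →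
      b < |(∑ i, (α i : ℝ) * (lam i - γ)) - (Λ j - γ)| := by
  intro j α hα2 hαM
  have hN2 : 2 ≤ (∑ i, α i) := hα2
  set N : ℕ := ∑ i, α i with hN
  set S : ℝ := ∑ i, (α i : ℝ) * lam i with hS
  have hNcast : ((N : ℝ)) = ∑ i, (α i : ℝ) := by rw [hN]; push_cast; rfl
  have hrw : (∑ i, (α i : ℝ) * (lam i - γ)) - (Λ j - γ)
      = (S - Λ j) - γ * ((N : ℝ) - 1) := by
    have : (∑ i, (α i : ℝ) * (lam i - γ)) = S - (∑ i, (α i : ℝ)) * γ := by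
      rw [hS, Finset.sum_mul, ← Finset.sum_sub_distrib]
      exact Finset.sum_congr rfl (fun i _ => by ring)
    rw [this, ← hNcast]; ring
  rw [hrw]
  have hNr : (2 : ℝ) ≤ (N : ℝ) := by exact_mod_cast hN2
  by_cases hne : S = Λ j
  · rw [hne, sub_self, zero_sub, abs_neg, abs_of_nonneg (by nlinarith)]
    have hbγ : b ≤ γ / 2 := by
      rw [hb]; have := min_le_left γ a; linarith
    nlinarith
  · have hΛ1 : 0 < Λ1 := lt_of_lt_of_le (hΛpos j) (hmax j)
    have hΛl1 : Λl ≤ Λ1 := le_trans (hmin j) (hmax j)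
    have hd : 0 < Λl - γ := by linarith
    have hdiv : (Λ1 - γ) / (Λl - γ) ≤ 2 * Λ1 / Λl := by
      rw [div_le_div_iff₀ hd hΛl0]; nlinarith
    have hfl : ⌊(Λ1 - γ) / (Λl - γ)⌋₊ ≤ ⌊2 * Λ1 / Λl⌋₊ := Nat.floor_le_floor hdiv
    have hgapj := hgap j α hα2 (le_trans hαM hfl) hne
    have hMr : (N : ℝ) ≤ (⌊(Λ1 - γ) / (Λl - γ)⌋₊ : ℝ) := by exact_mod_cast hαM
    have habs : |S - Λ j| - γ * ((N : ℝ) - 1) ≤ |(S - Λ j) - γ * ((N : ℝ) - 1)| := by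
      have h1 : |S - Λ j| - |γ * ((N : ℝ) - 1)| ≤ |(S - Λ j) - γ * ((N : ℝ) - 1)| :=
        abs_sub_abs_le_abs_sub _ _
      have h2 : |γ * ((N : ℝ) - 1)| = γ * ((N : ℝ) - 1) :=
        abs_of_nonneg (by nlinarith)
      linarith
    have hba : b ≤ a / 2 := by
      rw [hb]; have := min_le_right γ a; linarith
    have hmono : γ * ((N : ℝ) - 1) ≤ γ * ((⌊(Λ1 - γ) / (Λl - γ)⌋₊ : ℝ) - 1) := by
      nlinarith
    linarith
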